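/- arXiv:1108.4710 — 9 statements merged into one kernel-verified Lean document; each statement's English description precedes it below -/
import Mathlib

section
/- If there exists x ∈ X with ω-limit set ωf(x) = X, then for every pair of nonempty open sets U,V ⊆ X, the set N₊(U,V) = {k ∈ ℕ : f^k(U) ∩ V ≠ ∅} is infinite. -/
open Filter Set Topology

def omegaLimitSet {X : Type*} [TopologicalSpace X] (f : X → X) (x : X) : Set X :=
  ⋂ n : ℕ, closure {y | ∃ k, n ≤ k ∧ f^[k] x = y}

theorem frequently_iterate_mem_of_mem_omegaLimitSet {X : Type*} [TopologicalSpace X]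
    {f : X → X} {x w : X} (hw : w ∈ omegaLimitSet f x) {W : Set X} (hW : W ∈ 𝓝 w) :
    ∃ᶠ k in atTop, f^[k] x ∈ W := by
  refine frequently_atTop.mpr fun n => ?_
  obtain ⟨_, hyW, k, hnk, rfl⟩ := mem_closure_iff_nhds.mp (mem_iInter.mp hw n) W hW
  exact ⟨k, hnk, hyW⟩

/-- Each visit of the orbit to `V` at a time `k ≥ m` puts `k - m` into the set. -/
theorem infinite_setOf_iterate_image_inter_nonempty {X : Type*} {f : X → X} {x : X}
    {U V : Set X} {m : ℕ} (hm : f^[m] x ∈ U) (hV : ∃ᶠ k in atTop, f^[k] x ∈ V) :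
    {k : ℕ | (f^[k] '' U ∩ V).Nonempty}.Infinite := by
  refine Nat.frequently_atTop_iff_infinite.mp <|
    (tendsto_sub_atTop_nat m).frequently_map _ (fun k ⟨hkV, hmk⟩ => ?_)
      (hV.and_eventually (eventually_ge_atTop m))
  refine ⟨f^[k] x, ⟨f^[m] x, hm, ?_⟩, hkV⟩
  rw [← Function.iterate_add_apply, Nat.sub_add_cancel hmk]

theorem stmt_1_general {X : Type*} [TopologicalSpace X] (f : X → X)
    (x : X)
    (hx : (⋂ n : ℕ, closure {y | ∃ k, n ≤ k ∧ f^[k] x = y}) = Set.univ) :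
    ∀ U V : Set X, IsOpen U → U.Nonempty → IsOpen V → V.Nonempty →
      {k : ℕ | (f^[k] '' U ∩ V).Nonempty}.Infinite := by
  intro U V hU ⟨u, hu⟩ hV ⟨v, hv⟩
  have hω : ∀ w, w ∈ omegaLimitSet f x := fun w => (hx ▸ mem_univ w :)
  obtain ⟨m, hm⟩ := (frequently_iterate_mem_of_mem_omegaLimitSet (hω u) (hU.mem_nhds hu)).exists
  exact infinite_setOf_iterate_image_inter_nonempty hm
    (frequently_iterate_mem_of_mem_omegaLimitSet (hω v) (hV.mem_nhds hv))

/-- If `ωf(x) = X` for some `x`, then for every pair of nonempty open sets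
`U, V` the set `N₊(U,V) = {k : ℕ | f^[k] '' U ∩ V ≠ ∅}` is infinite. -/
theorem stmt_1 {X : Type*} [TopologicalSpace X] (f : X → X) (hf : Continuous f)
    (x : X)
    (hx : (⋂ n : ℕ, closure {y | ∃ k, n ≤ k ∧ f^[k] x = y}) = Set.univ) :
    ∀ U V : Set X, IsOpen U → U.Nonempty → IsOpen V → V.Nonempty →
      {k : ℕ | (f^[k] '' U ∩ V).Nonempty}.Infinite :=
  stmt_1_general f x hx
end

section
/- If X is a perfect Hausdorff space and (X,f) is topologically transitive, then for every nonempty open U ⊆ X, the set N₊(U,U) = {k ∈ ℕ : f^k(U) ∩ U ≠ ∅} is infinite. -/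
/-!
A nonempty open set `A` of a perfect Hausdorff space contains two disjoint nonempty open
sets, and transitivity applied to them yields a time `j > 0` at which `f^[j]` maps a point of
`A` back into `A` (time `0` is excluded by disjointness). If `k` is a return time of `U`,
applying this to the open set `U ∩ f^[k] ⁻¹' U` produces the larger return time `k + j`.
So the return times of `U` have no maximum, and `0` is one of them.
-/

open Set Function

lemma Set.infinite_of_nonempty_of_forall_exists_gt {α : Type*} [Preorder α] {s : Set α}
    (hs : s.Nonempty) (h : ∀ a ∈ s, ∃ b ∈ s, a < b) : s.Infinite := fun hfin => by
  obtain ⟨a, ha⟩ := hfin.exists_maximal hs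
  obtain ⟨b, hb, hab⟩ := h a ha.prop
  exact ha.not_gt hb hab

lemma exists_pos_iterate_mem_of_disjoint {X : Type*} {f : X → X} {A V W : Set X}
    (hV : V ⊆ A) (hW : W ⊆ A) (hVW : Disjoint V W) {k : ℕ} (hk : (f^[k] '' V ∩ W).Nonempty) :
    0 < k ∧ ∃ y ∈ A, f^[k] y ∈ A := by
  obtain ⟨_, ⟨y, hyV, rfl⟩, hyW⟩ := hk
  refine ⟨Nat.pos_of_ne_zero ?_, y, hV hyV, hW hyW⟩
  rintro rfl
  exact hVW.ne_of_mem hyV hyW rfl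

section

variable {X : Type*} [TopologicalSpace X]

lemma IsOpen.nontrivial_of_forall_not_isOpen_singleton
    (hperf : ∀ x : X, ¬ IsOpen ({x} : Set X)) {U : Set X} (hU : IsOpen U) (hne : U.Nonempty) :
    U.Nontrivial := by
  rcases hne.exists_eq_singleton_or_nontrivial with ⟨x, rfl⟩ | h
  · exact absurd hU (hperf x)
  · exact h

lemma Set.Nontrivial.exists_disjoint_isOpen_subsets [T2Space X] {U : Set X} (hU : IsOpen U)
    (hU' : U.Nontrivial) :
    ∃ V W : Set X, IsOpen V ∧ V.Nonempty ∧ V ⊆ U ∧ IsOpen W ∧ W.Nonempty ∧ W ⊆ U ∧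
      Disjoint V W := by
  obtain ⟨x, hx, y, hy, hxy⟩ := hU'
  obtain ⟨V, W, hV, hW, hxV, hyW, hVW⟩ := t2_separation hxy
  exact ⟨U ∩ V, U ∩ W, hU.inter hV, ⟨x, hx, hxV⟩, inter_subset_left, hU.inter hW,
    ⟨y, hy, hyW⟩, inter_subset_left,
    hVW.mono inter_subset_right inter_subset_right⟩

lemma exists_pos_iterate_mem_of_transitive [T2Space X]
    (hperf : ∀ x : X, ¬ IsOpen ({x} : Set X)) {f : X → X}
    (hTT : ∀ U V : Set X, IsOpen U → U.Nonempty → IsOpen V → V.Nonempty →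
      ∃ k : ℕ, (f^[k] '' U ∩ V).Nonempty ∨ (f^[k] '' V ∩ U).Nonempty)
    {A : Set X} (hA : IsOpen A) (hne : A.Nonempty) :
    ∃ j, 0 < j ∧ ∃ y ∈ A, f^[j] y ∈ A := by
  obtain ⟨V, W, hV, hVne, hVA, hW, hWne, hWA, hVW⟩ :=
    (hA.nontrivial_of_forall_not_isOpen_singleton hperf hne).exists_disjoint_isOpen_subsets hA
  obtain ⟨k, hk | hk⟩ := hTT V W hV hVne hW hWne
  · exact ⟨k, exists_pos_iterate_mem_of_disjoint hVA hWA hVW hk⟩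
  · exact ⟨k, exists_pos_iterate_mem_of_disjoint hWA hVA hVW.symm hk⟩

lemma exists_gt_iterate_image_inter_self_nonempty {f : X → X} (hf : Continuous f)
    (hret : ∀ A : Set X, IsOpen A → A.Nonempty → ∃ j, 0 < j ∧ ∃ y ∈ A, f^[j] y ∈ A)
    {U : Set X} (hU : IsOpen U) {k : ℕ} (hk : (f^[k] '' U ∩ U).Nonempty) :
    ∃ m, (f^[m] '' U ∩ U).Nonempty ∧ k < m := by
  obtain ⟨_, ⟨x, hxU, rfl⟩, hkx⟩ := hk
  obtain ⟨j, hj, y, ⟨hyU, -⟩, -, hjy⟩ :=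
    hret (U ∩ f^[k] ⁻¹' U) (hU.inter ((hf.iterate k).isOpen_preimage U hU)) ⟨x, hxU, hkx⟩
  refine ⟨k + j, ⟨_, mem_image_of_mem _ hyU, ?_⟩, by omega⟩
  rwa [iterate_add_apply]

end

/-- If `X` is perfect Hausdorff and `(X,f)` is topologically transitive, then
for every nonempty open `U` the set `N₊(U,U)` is infinite. -/
theorem stmt_9 {X : Type*} [TopologicalSpace X] [T2Space X]
    (hperf : ∀ x : X, ¬ IsOpen ({x} : Set X))
    (f : X → X) (hf : Continuous f)
    (hTT : ∀ U V : Set X, IsOpen U → U.Nonempty → IsOpen V → V.Nonempty →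
      ∃ k : ℕ, (f^[k] '' U ∩ V).Nonempty ∨ (f^[k] '' V ∩ U).Nonempty) :
    ∀ U : Set X, IsOpen U → U.Nonempty →
      {k : ℕ | (f^[k] '' U ∩ U).Nonempty}.Infinite := by
  intro U hU hne
  refine Set.infinite_of_nonempty_of_forall_exists_gt ⟨0, by simpa using hne⟩ fun k hk => ?_
  exact exists_gt_iterate_image_inter_self_nonempty hf
    (fun A hA hAne => exists_pos_iterate_mem_of_transitive hperf hTT hA hAne) hU hk
end

section
/- If X is a perfect Hausdorff space and (X,f) is topologically transitive, then for all nonempty open U,V ⊆ X the set N₊(U,V) = {k ∈ ℕ : f^k(U) ∩ V ≠ ∅} is infinite (i.e., TT implies TT₊₊). -/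
/-! Transitivity applied to two disjoint nonempty open pieces of a nonempty open set `W`
(they exist because `X` is perfect and Hausdorff) gives a return time `k ≥ 1` of `W` to
itself. Since `W ∩ f^[k] ⁻¹' W` is again nonempty and open, return times add up, so they are
unbounded. If `f^[m]` sends a point of `U` into `V`, each return time `k` of the open set
`U ∩ f^[m] ⁻¹' V` puts `m + k` in `N₊(U,V)`. Such an `m` exists: if transitivity only
gives `f^[k]` sending a point of `V` into `U`, a return time `m ≥ k` of `V ∩ f^[k] ⁻¹' U`
puts `m - k` in `N₊(U,V)`. -/

open Set Function

section

variable {X : Type*} [TopologicalSpace X] {f : X → X}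

theorem IsOpen.exists_disjoint_nonempty_open_subsets [T2Space X]
    (hperf : ∀ x : X, ¬ IsOpen ({x} : Set X)) {W : Set X} (hW : IsOpen W) (hne : W.Nonempty) :
    ∃ W₁ W₂ : Set X, IsOpen W₁ ∧ IsOpen W₂ ∧ W₁ ⊆ W ∧ W₂ ⊆ W ∧ W₁.Nonempty ∧ W₂.Nonempty ∧
      Disjoint W₁ W₂ := by
  obtain ⟨x, hx⟩ := hne
  obtain ⟨y, hyW, hyx⟩ : ∃ y ∈ W, y ≠ x :=
    ((nontrivial_iff_ne_singleton hx).2 fun h => hperf x (h ▸ hW)).exists_ne x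
  obtain ⟨A, B, hA, hB, hxA, hyB, hAB⟩ := t2_separation hyx.symm
  exact ⟨W ∩ A, W ∩ B, hW.inter hA, hW.inter hB, inter_subset_left, inter_subset_left,
    ⟨x, hx, hxA⟩, ⟨y, hyW, hyB⟩, hAB.mono inter_subset_right inter_subset_right⟩

theorem exists_pos_iterate_inter_preimage_self_nonempty [T2Space X]
    (hperf : ∀ x : X, ¬ IsOpen ({x} : Set X))
    (hTT : ∀ U V : Set X, IsOpen U → U.Nonempty → IsOpen V → V.Nonempty →
      ∃ k : ℕ, (U ∩ f^[k] ⁻¹' V).Nonempty ∨ (V ∩ f^[k] ⁻¹' U).Nonempty)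
    {W : Set X} (hW : IsOpen W) (hne : W.Nonempty) :
    ∃ k, 0 < k ∧ (W ∩ f^[k] ⁻¹' W).Nonempty := by
  obtain ⟨W₁, W₂, hW₁, hW₂, h₁, h₂, hne₁, hne₂, hdisj⟩ :=
    hW.exists_disjoint_nonempty_open_subsets hperf hne
  obtain ⟨k, hk⟩ := hTT W₁ W₂ hW₁ hne₁ hW₂ hne₂
  have hk0 : 0 < k := by
    refine Nat.pos_of_ne_zero fun hk0 => ?_
    simp only [hk0, iterate_zero, preimage_id] at hk
    exact hk.elim (not_disjoint_iff_nonempty_inter.2 · hdisj)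
      (not_disjoint_iff_nonempty_inter.2 · hdisj.symm)
  rcases hk with hk | hk
  · exact ⟨k, hk0, hk.mono (inter_subset_inter h₁ (preimage_mono h₂))⟩
  · exact ⟨k, hk0, hk.mono (inter_subset_inter h₂ (preimage_mono h₁))⟩

theorem exists_ge_iterate_inter_preimage_self_nonempty (hf : Continuous f)
    (hret : ∀ W : Set X, IsOpen W → W.Nonempty → ∃ k, 0 < k ∧ (W ∩ f^[k] ⁻¹' W).Nonempty)
    (n : ℕ) (W : Set X) (hW : IsOpen W) (hne : W.Nonempty) :
    ∃ k, n ≤ k ∧ (W ∩ f^[k] ⁻¹' W).Nonempty := by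
  induction n with
  | zero => exact ⟨0, le_rfl, by simpa using hne⟩
  | succ n ih =>
    obtain ⟨k, hnk, hk⟩ := ih
    obtain ⟨j, hj, x, ⟨hxW, -⟩, -, hjk⟩ := hret _ (hW.inter (hW.preimage (hf.iterate k))) hk
    exact ⟨k + j, by omega, x, hxW, by rwa [mem_preimage, iterate_add_apply]⟩

section UnboundedReturns

variable (hf : Continuous f)
  (hret : ∀ (n : ℕ) (W : Set X), IsOpen W → W.Nonempty →
    ∃ k, n ≤ k ∧ (W ∩ f^[k] ⁻¹' W).Nonempty)
  {U V : Set X} (hU : IsOpen U) (hV : IsOpen V)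
include hf hret hU hV

theorem exists_iterate_inter_preimage_nonempty_of_reverse {k : ℕ}
    (hk : (V ∩ f^[k] ⁻¹' U).Nonempty) : ∃ m, (U ∩ f^[m] ⁻¹' V).Nonempty := by
  obtain ⟨m, hkm, x, ⟨-, hxU⟩, hmV, -⟩ := hret k _ (hV.inter (hU.preimage (hf.iterate k))) hk
  refine ⟨m - k, f^[k] x, hxU, ?_⟩
  rwa [mem_preimage, ← iterate_add_apply, Nat.sub_add_cancel hkm]

theorem infinite_setOf_iterate_inter_preimage_nonempty {m : ℕ}
    (hm : (U ∩ f^[m] ⁻¹' V).Nonempty) : {k | (U ∩ f^[k] ⁻¹' V).Nonempty}.Infinite := by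
  refine infinite_of_forall_exists_gt fun n => ?_
  obtain ⟨k, hnk, x, ⟨hxU, -⟩, -, hkV⟩ :=
    hret (n + 1) _ (hU.inter (hV.preimage (hf.iterate m))) hm
  refine ⟨m + k, ⟨x, hxU, ?_⟩, by omega⟩
  rwa [mem_preimage, iterate_add_apply]

end UnboundedReturns

end

/-- TT implies TT₊₊ on a perfect Hausdorff space: for all nonempty open
`U, V` the set `N₊(U,V)` is infinite. -/
theorem stmt_10 {X : Type*} [TopologicalSpace X] [T2Space X]
    (hperf : ∀ x : X, ¬ IsOpen ({x} : Set X))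
    (f : X → X) (hf : Continuous f)
    (hTT : ∀ U V : Set X, IsOpen U → U.Nonempty → IsOpen V → V.Nonempty →
      ∃ k : ℕ, (f^[k] '' U ∩ V).Nonempty ∨ (f^[k] '' V ∩ U).Nonempty) :
    ∀ U V : Set X, IsOpen U → U.Nonempty → IsOpen V → V.Nonempty →
      {k : ℕ | (f^[k] '' U ∩ V).Nonempty}.Infinite := by
  simp only [image_inter_nonempty_iff] at hTT ⊢
  have hret := exists_ge_iterate_inter_preimage_self_nonempty hf fun W hW hne =>
    exists_pos_iterate_inter_preimage_self_nonempty hperf hTT hW hne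
  intro U V hU hUne hV hVne
  obtain ⟨k, hk | hk⟩ := hTT U V hU hUne hV hVne
  · exact infinite_setOf_iterate_inter_preimage_nonempty hf hret hU hV hk
  · obtain ⟨m, hm⟩ := exists_iterate_inter_preimage_nonempty_of_reverse hf hret hU hV hk
    exact infinite_setOf_iterate_inter_preimage_nonempty hf hret hU hV hm
end

section
/- If (X,f) is topologically transitive and A ⊆ X is +invariant, then the interior of f^{-1}(A) \ A is either empty or a single isolated point. -/
open Function Set

section

variable {X : Type*} {f : X → X}

/-- A point of `f⁻¹(A) \ A` lands in `A` after one step and then never leaves it. -/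
lemma disjoint_image_iterate_of_subset_preimage_diff {A W : Set X} (hA : MapsTo f A A)
    (hW : W ⊆ f ⁻¹' A \ A) {k : ℕ} (hk : k ≠ 0) : Disjoint (f^[k] '' W) W := by
  obtain ⟨n, rfl⟩ := Nat.exists_eq_succ_of_ne_zero hk
  rw [disjoint_left]
  rintro _ ⟨z, hz, rfl⟩ hz'
  rw [iterate_succ_apply] at hz'
  exact (hW hz').2 (hA.iterate n (hW hz).1)

/-- Transitivity applied to disjoint neighbourhoods, inside `W`, of two distinct points of `W`
would make `W` meet one of its iterates. -/
lemma subsingleton_of_disjoint_image_iterate [TopologicalSpace X] [T2Space X]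
    (hTT : ∀ U V : Set X, IsOpen U → U.Nonempty → IsOpen V → V.Nonempty →
      ∃ k : ℕ, (f^[k] '' U ∩ V).Nonempty ∨ (f^[k] '' V ∩ U).Nonempty)
    {W : Set X} (hWo : IsOpen W) (hW : ∀ k ≠ 0, Disjoint (f^[k] '' W) W) : W.Subsingleton := by
  have no_return : ∀ {U V : Set X}, Disjoint U V → ∀ k : ℕ,
      ¬(f^[k] '' (U ∩ W) ∩ (V ∩ W)).Nonempty := by
    rintro U V hUV k ⟨z, hzU, hzV⟩
    rcases eq_or_ne k 0 with rfl | hk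
    · rw [iterate_zero, image_id] at hzU
      exact hUV.le_bot ⟨hzU.1, hzV.1⟩
    · exact (hW k hk).le_bot ⟨image_mono inter_subset_right hzU, hzV.2⟩
  intro x hx y hy
  by_contra hne
  obtain ⟨U, V, hU, hV, hxU, hyV, hUV⟩ := t2_separation hne
  obtain ⟨k, hk | hk⟩ := hTT (U ∩ W) (V ∩ W) (hU.inter hWo) ⟨x, hxU, hx⟩
    (hV.inter hWo) ⟨y, hyV, hy⟩
  · exact no_return hUV k hk
  · exact no_return hUV.symm k hk

end

theorem stmt_11_general {X : Type*} [TopologicalSpace X] [T2Space X]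
    (f : X → X)
    (hTT : ∀ U V : Set X, IsOpen U → U.Nonempty → IsOpen V → V.Nonempty →
      ∃ k : ℕ, (f^[k] '' U ∩ V).Nonempty ∨ (f^[k] '' V ∩ U).Nonempty)
    (A : Set X) (hA : f '' A ⊆ A) :
    interior (f ⁻¹' A \ A) = ∅ ∨
      ∃ x : X, interior (f ⁻¹' A \ A) = {x} ∧ IsOpen ({x} : Set X) := by
  have hW : (interior (f ⁻¹' A \ A)).Subsingleton :=
    subsingleton_of_disjoint_image_iterate hTT isOpen_interior fun _ hk ↦
      disjoint_image_iterate_of_subset_preimage_diff (mapsTo_iff_image_subset.2 hA)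
        interior_subset hk
  exact hW.eq_empty_or_singleton.imp id fun ⟨x, hx⟩ ↦ ⟨x, hx, hx ▸ isOpen_interior⟩

/-- For a topologically transitive system and a +invariant set `A`, the
interior of `f⁻¹(A) \ A` is empty or a single isolated point. -/
theorem stmt_11 {X : Type*} [TopologicalSpace X] [T2Space X]
    (f : X → X) (hf : Continuous f)
    (hTT : ∀ U V : Set X, IsOpen U → U.Nonempty → IsOpen V → V.Nonempty →
      ∃ k : ℕ, (f^[k] '' U ∩ V).Nonempty ∨ (f^[k] '' V ∩ U).Nonempty)
    (A : Set X) (hA : f '' A ⊆ A) :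
    interior (f ⁻¹' A \ A) = ∅ ∨
      ∃ x : X, interior (f ⁻¹' A \ A) = {x} ∧ IsOpen ({x} : Set X) :=
  stmt_11_general f hTT A hA
end

section
/- If (X,f) is topologically transitive, then either f(X) is dense in X, or X \ closure(f(X)) consists of a single isolated point. In particular, if X is also perfect then f(X) is dense. -/
/-!
Every point of `f^[k+1] '' s` lies in `range f`, so transitivity between two nonempty open subsets
of the open set `W = (closure (range f))ᶜ` can only be realised with `k = 0`: any two such subsets
meet. Thus `W` is preirreducible, hence a subsingleton in a Hausdorff space; being open, it is
either empty or an isolated point.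
-/

open Set

theorem inter_nonempty_of_iterate_image_inter_nonempty {X : Type*} [TopologicalSpace X]
    {f : X → X} {s t : Set X} {k : ℕ} (ht : t ⊆ (closure (range f))ᶜ)
    (h : (f^[k] '' s ∩ t).Nonempty) : (s ∩ t).Nonempty := by
  obtain ⟨_, ⟨x, hxs, rfl⟩, hxt⟩ := h
  cases k with
  | zero => exact ⟨x, hxs, hxt⟩
  | succ k =>
    refine absurd (subset_closure ?_) (ht hxt)
    exact ⟨f^[k] x, (Function.iterate_succ_apply' f k x).symm⟩

theorem isPreirreducible_compl_closure_range {X : Type*} [TopologicalSpace X] {f : X → X}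
    (hTT : ∀ U V : Set X, IsOpen U → U.Nonempty → IsOpen V → V.Nonempty →
      ∃ k : ℕ, (f^[k] '' U ∩ V).Nonempty ∨ (f^[k] '' V ∩ U).Nonempty) :
    IsPreirreducible (closure (range f))ᶜ := by
  intro u v hu hv hWu hWv
  have hW : IsOpen (closure (range f))ᶜ := isClosed_closure.isOpen_compl
  obtain ⟨k, h | h⟩ := hTT _ _ (hW.inter hu) hWu (hW.inter hv) hWv
  · obtain ⟨x, ⟨-, hxu⟩, hxW, hxv⟩ :=
      inter_nonempty_of_iterate_image_inter_nonempty inter_subset_left h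
    exact ⟨x, hxW, hxu, hxv⟩
  · obtain ⟨x, ⟨-, hxv⟩, hxW, hxu⟩ :=
      inter_nonempty_of_iterate_image_inter_nonempty inter_subset_left h
    exact ⟨x, hxW, hxu, hxv⟩

theorem stmt_12_general {X : Type*} [TopologicalSpace X] [T2Space X]
    (f : X → X)
    (hTT : ∀ U V : Set X, IsOpen U → U.Nonempty → IsOpen V → V.Nonempty →
      ∃ k : ℕ, (f^[k] '' U ∩ V).Nonempty ∨ (f^[k] '' V ∩ U).Nonempty) :
    (Dense (Set.range f) ∨
      ∃ x : X, Set.univ \ closure (Set.range f) = {x} ∧ IsOpen ({x} : Set X)) ∧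
    ((∀ x : X, ¬ IsOpen ({x} : Set X)) → Dense (Set.range f)) := by
  have hW : IsOpen (closure (range f))ᶜ := isClosed_closure.isOpen_compl
  have dichotomy : Dense (range f) ∨
      ∃ x : X, univ \ closure (range f) = {x} ∧ IsOpen ({x} : Set X) := by
    rcases (isPreirreducible_compl_closure_range hTT).subsingleton.eq_empty_or_singleton
      with hempty | ⟨x, hx⟩
    · exact .inl (dense_iff_closure_eq.mpr (compl_empty_iff.mp hempty))
    · exact .inr ⟨x, by rw [← compl_eq_univ_sdiff, hx], hx ▸ hW⟩
  refine ⟨dichotomy, fun hperfect => ?_⟩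
  rcases dichotomy with hdense | ⟨x, -, hx⟩
  · exact hdense
  · exact absurd hx (hperfect x)

/-- For a topologically transitive system, either `f(X)` is dense, or its
complement's closure misses exactly one point, which is isolated; in
particular if `X` is perfect then `f(X)` is dense. -/
theorem stmt_12 {X : Type*} [TopologicalSpace X] [T2Space X]
    (f : X → X) (hf : Continuous f)
    (hTT : ∀ U V : Set X, IsOpen U → U.Nonempty → IsOpen V → V.Nonempty →
      ∃ k : ℕ, (f^[k] '' U ∩ V).Nonempty ∨ (f^[k] '' V ∩ U).Nonempty) :
    (Dense (Set.range f) ∨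
      ∃ x : X, Set.univ \ closure (Set.range f) = {x} ∧ IsOpen ({x} : Set X)) ∧
    ((∀ x : X, ¬ IsOpen ({x} : Set X)) → Dense (Set.range f)) :=
  stmt_12_general f hTT
end

section
/- If (X,f) satisfies TT₊ and X is a Hausdorff space containing at least one isolated point, then X is finite and consists of a single periodic orbit. -/
/-!
An isolated point `x` is periodic: transitivity from `{x}ᶜ` to `{x}` gives `x` a preimage, and
transitivity from `{x}` to the open set `f⁻¹' {x}` then returns the orbit of `x` to `x`. The orbit
of `x` is therefore finite, hence closed, and transitivity from `{x}` to its complement shows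
that the complement is empty.
-/

open Function Set

theorem Function.range_iterate_eq_image_Iio_minimalPeriod {α : Type*} {f : α → α} {x : α}
    (hx : x ∈ periodicPts f) :
    range (f^[·] x) = (f^[·] x) '' Iio (minimalPeriod f x) := by
  refine Subset.antisymm ?_ (image_subset_range _ _)
  rintro _ ⟨n, rfl⟩
  exact ⟨n % minimalPeriod f x, Nat.mod_lt _ (minimalPeriod_pos_of_mem_periodicPts hx),
    iterate_mod_minimalPeriod_eq⟩

section

variable {X : Type*} [TopologicalSpace X]

/-- The condition TT₊; note that `k = 0` is allowed. -/
def IsTopologicallyTransitivePlus (f : X → X) : Prop :=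
  ∀ U V : Set X, IsOpen U → U.Nonempty → IsOpen V → V.Nonempty →
    ∃ k : ℕ, (f^[k] '' U ∩ V).Nonempty

namespace IsTopologicallyTransitivePlus

variable {f : X → X} {x : X}

theorem exists_iterate_mem (hf : IsTopologicallyTransitivePlus f) (hx : IsOpen {x})
    {V : Set X} (hV : IsOpen V) (hVne : V.Nonempty) : ∃ k, f^[k] x ∈ V := by
  obtain ⟨k, _, ⟨_, rfl, rfl⟩, hk⟩ := hf {x} V hx (singleton_nonempty x) hV hVne
  exact ⟨k, hk⟩

theorem exists_apply_eq [T1Space X] (hf : IsTopologicallyTransitivePlus f) (hx : IsOpen {x}) :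
    ∃ y, f y = x := by
  by_cases hne : ({x}ᶜ : Set X).Nonempty
  · obtain ⟨k, _, ⟨u, hu, rfl⟩, hk⟩ :=
      hf {x}ᶜ {x} isOpen_compl_singleton hne hx (singleton_nonempty x)
    cases k with
    | zero => exact absurd hk hu
    | succ k => exact ⟨f^[k] u, by rwa [iterate_succ_apply'] at hk⟩
  · rw [not_nonempty_iff_eq_empty, compl_empty_iff] at hne
    exact ⟨x, eq_univ_iff_forall.1 hne (f x)⟩

theorem mem_periodicPts [T1Space X] (hf : IsTopologicallyTransitivePlus f) (hcont : Continuous f)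
    (hx : IsOpen {x}) : x ∈ periodicPts f := by
  obtain ⟨k, hk⟩ := hf.exists_iterate_mem hx (hx.preimage hcont) (hf.exists_apply_eq hx)
  exact mk_mem_periodicPts k.succ_pos (by rwa [IsPeriodicPt, IsFixedPt, iterate_succ_apply'])

theorem range_iterate_eq_univ [T1Space X] (hf : IsTopologicallyTransitivePlus f)
    (hx : IsOpen {x}) (hfin : (range (f^[·] x)).Finite) : range (f^[·] x) = univ := by
  by_contra h
  obtain ⟨k, hk⟩ := hf.exists_iterate_mem hx hfin.isClosed.isOpen_compl (nonempty_compl.2 h)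
  exact hk (mem_range_self k)

end IsTopologicallyTransitivePlus

end

/-- If `(X,f)` satisfies TT₊ and the Hausdorff space `X` has an isolated
point, then `X` is finite and is a single periodic orbit. -/
theorem stmt_15 {X : Type*} [TopologicalSpace X] [T2Space X]
    (f : X → X) (hf : Continuous f)
    (hTT : ∀ U V : Set X, IsOpen U → U.Nonempty → IsOpen V → V.Nonempty →
      ∃ k : ℕ, (f^[k] '' U ∩ V).Nonempty)
    (hiso : ∃ x : X, IsOpen ({x} : Set X)) :
    Finite X ∧ ∃ (x : X) (n : ℕ), 0 < n ∧ f^[n] x = x ∧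
      (∀ i j : ℕ, i < n → j < n → f^[i] x = f^[j] x → i = j) ∧
      ∀ y : X, ∃ i : ℕ, i < n ∧ f^[i] x = y := by
  have hTT : IsTopologicallyTransitivePlus f := hTT
  obtain ⟨x, hx⟩ := hiso
  have hper := hTT.mem_periodicPts hf hx
  have horbit := range_iterate_eq_image_Iio_minimalPeriod hper
  have hfin : (range (f^[·] x)).Finite := horbit ▸ (finite_Iio _).image _
  have huniv := hTT.range_iterate_eq_univ hx hfin
  refine ⟨finite_univ_iff.1 (huniv ▸ hfin), x, minimalPeriod f x,
    minimalPeriod_pos_of_mem_periodicPts hper, iterate_minimalPeriod,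
    fun i j hi hj h ↦ iterate_injOn_Iio_minimalPeriod hi hj h, fun y ↦ ?_⟩
  obtain ⟨i, hi, rfl⟩ : y ∈ (f^[·] x) '' Iio (minimalPeriod f x) := horbit ▸ huniv ▸ mem_univ y
  exact ⟨i, hi, rfl⟩
end

section
/- If (X,f) is topologically transitive on a Hausdorff space and x is an isolated point with f^{-1}({x}) containing more than one point, then x is periodic and f^{-1}({x}) consists of exactly two points. -/
/-!
Let `P = f⁻¹{x}`, an open set. If `A, B ⊆ P` are disjoint nonempty open sets, transitivity sends
one of them into the other under some iterate `f^[k]` with `k > 0`; since `f` maps `P` to `x`,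
this puts an orbit point `f^[k-1] x` into `A ∪ B`. Applied to two separated points of `P`, this
makes `x` periodic. For a periodic point at most one orbit point `z` lies in `P`, so applying the
same argument inside `P \ {z}` shows that `P \ {z}` has at most one point.
-/

open Function Set

theorem Function.iterate_eq_of_iterate_succ_eq {α : Type*} {f : α → α} {x : α} {i j : ℕ}
    (hi : f^[i + 1] x = x) (hj : f^[j + 1] x = x) : f^[i] x = f^[j] x := by
  wlog hij : i ≤ j generalizing i j
  · exact (this hj hi (le_of_not_ge hij)).symm
  obtain ⟨d, rfl⟩ := Nat.exists_eq_add_of_le hij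
  have hd : f^[d] x = x := by
    rwa [show i + d + 1 = d + (i + 1) by omega, iterate_add_apply, hi] at hj
  rw [iterate_add_apply, hd]

theorem exists_iterate_mem_of_image_iterate_inter_nonempty {X : Type*} {f : X → X} {x : X}
    {A B : Set X} {k : ℕ} (hA : A ⊆ f ⁻¹' {x}) (hAB : Disjoint A B)
    (h : (f^[k] '' A ∩ B).Nonempty) : ∃ m, f^[m] x ∈ B := by
  obtain ⟨_, ⟨u, huA, rfl⟩, hkuB⟩ := h
  cases k with
  | zero => exact absurd hkuB (disjoint_left.mp hAB huA)
  | succ m =>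
    refine ⟨m, ?_⟩
    rwa [iterate_succ_apply, show f u = x from hA huA] at hkuB

theorem exists_iterate_mem_union_of_subset_preimage {X : Type*} [TopologicalSpace X]
    {f : X → X}
    (hTT : ∀ U V : Set X, IsOpen U → U.Nonempty → IsOpen V → V.Nonempty →
      ∃ k : ℕ, (f^[k] '' U ∩ V).Nonempty ∨ (f^[k] '' V ∩ U).Nonempty)
    {x : X} {A B : Set X} (hA : IsOpen A) (hB : IsOpen B) (hAne : A.Nonempty)
    (hBne : B.Nonempty) (hAx : A ⊆ f ⁻¹' {x}) (hBx : B ⊆ f ⁻¹' {x}) (hAB : Disjoint A B) :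
    ∃ m, f^[m] x ∈ A ∪ B := by
  obtain ⟨k, hk | hk⟩ := hTT A B hA hAne hB hBne
  · obtain ⟨m, hm⟩ := exists_iterate_mem_of_image_iterate_inter_nonempty hAx hAB hk
    exact ⟨m, Or.inr hm⟩
  · obtain ⟨m, hm⟩ := exists_iterate_mem_of_image_iterate_inter_nonempty hBx hAB.symm hk
    exact ⟨m, Or.inl hm⟩

theorem exists_iterate_mem_preimage_inter_of_ne {X : Type*} [TopologicalSpace X] [T2Space X]
    {f : X → X}
    (hTT : ∀ U V : Set X, IsOpen U → U.Nonempty → IsOpen V → V.Nonempty →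
      ∃ k : ℕ, (f^[k] '' U ∩ V).Nonempty ∨ (f^[k] '' V ∩ U).Nonempty)
    {x : X} (hP : IsOpen (f ⁻¹' {x})) {s : Set X} (hs : IsOpen s) {p q : X}
    (hp : p ∈ f ⁻¹' {x} ∩ s) (hq : q ∈ f ⁻¹' {x} ∩ s) (hpq : p ≠ q) :
    ∃ m, f^[m] x ∈ f ⁻¹' {x} ∩ s := by
  obtain ⟨U, V, hU, hV, hpU, hqV, hUV⟩ := t2_separation hpq
  obtain ⟨m, hm⟩ := exists_iterate_mem_union_of_subset_preimage hTT
    ((hP.inter hs).inter hU) ((hP.inter hs).inter hV) ⟨p, hp, hpU⟩ ⟨q, hq, hqV⟩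
    (fun _ h ↦ h.1.1) (fun _ h ↦ h.1.1) (hUV.mono inter_subset_right inter_subset_right)
  exact ⟨m, hm.elim And.left And.left⟩

/-- If `(X,f)` is topologically transitive, `x` is isolated, and `f⁻¹({x})`
has more than one point, then `x` is periodic and `f⁻¹({x})` has exactly two
points. -/
theorem stmt_16 {X : Type*} [TopologicalSpace X] [T2Space X]
    (f : X → X) (hf : Continuous f)
    (hTT : ∀ U V : Set X, IsOpen U → U.Nonempty → IsOpen V → V.Nonempty →
      ∃ k : ℕ, (f^[k] '' U ∩ V).Nonempty ∨ (f^[k] '' V ∩ U).Nonempty)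
    (x : X) (hx : IsOpen ({x} : Set X))
    (hpre : (f ⁻¹' {x}).Nontrivial) :
    (∃ n : ℕ, 0 < n ∧ f^[n] x = x) ∧
      ∃ a b : X, a ≠ b ∧ f ⁻¹' {x} = {a, b} := by
  have hP : IsOpen (f ⁻¹' {x}) := hx.preimage hf
  obtain ⟨a, ha, b, hb, hab⟩ := id hpre
  obtain ⟨m, hz, -⟩ :=
    exists_iterate_mem_preimage_inter_of_ne hTT hP isOpen_univ ⟨ha, trivial⟩ ⟨hb, trivial⟩ hab
  set z := f^[m] x
  have hperiodic : f^[m + 1] x = x := by rwa [iterate_succ_apply']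
  have hsub : (f ⁻¹' {x} \ {z}).Subsingleton := by
    intro p hp q hq
    by_contra hpq
    obtain ⟨j, hj, hjz⟩ := exists_iterate_mem_preimage_inter_of_ne hTT hP isOpen_compl_singleton
      hp hq hpq
    exact hjz (iterate_eq_of_iterate_succ_eq (by rwa [iterate_succ_apply']) hperiodic)
  obtain ⟨w, hw, hwz⟩ := hpre.exists_ne z
  refine ⟨⟨m + 1, m.succ_pos, hperiodic⟩, z, w, hwz.symm, ?_⟩
  ext p
  refine ⟨fun hp ↦ ?_, ?_⟩
  · by_cases hpz : p = z
    · exact Or.inl hpz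
    · exact Or.inr (hsub ⟨hp, hpz⟩ ⟨hw, hwz⟩)
  · rintro (rfl | rfl)
    exacts [hz, hw]
end

section
/- If (X,f) is topologically transitive on a Hausdorff space and x is an isolated point, then every point of the backward orbit O₋(x) = ⋃_{k≥0} f^{-k}({x}) is isolated; hence the set of isolated points is open and −invariant. -/
/-!
Let `x` be isolated and `f y = x`, and suppose `y` is not isolated. Then `W = f⁻¹' {x}` is an
infinite open set. Two disjoint nonempty open subsets of `W` are linked by some iterate `f^[k]`,
necessarily with `k ≥ 1`, and since `f` collapses `W` to `x` this puts an iterate of `x` in one of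
them. Applied to `W` itself this makes `x` periodic, so its forward orbit `O` is finite; applied to
the infinite open set `W \ O` it puts a point of `O` outside `O`.
-/

open Set Function

/-- Unlike `MulAction.IsTopologicallyTransitive`, an iterate may carry either set into the other. -/
def TopTransitive {X : Type*} [TopologicalSpace X] (f : X → X) : Prop :=
  ∀ U V : Set X, IsOpen U → U.Nonempty → IsOpen V → V.Nonempty →
    ∃ k : ℕ, (f^[k] '' U ∩ V).Nonempty ∨ (f^[k] '' V ∩ U).Nonempty

theorem Function.IsPeriodicPt.finite_range_iterate {α : Type*} {f : α → α} {n : ℕ} {x : α}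
    (h : IsPeriodicPt f n x) (hn : 0 < n) : (range fun m => f^[m] x).Finite :=
  ((finite_Iio n).image fun m => f^[m] x).subset <|
    range_subset_iff.2 fun m => ⟨m % n, Nat.mod_lt m hn, h.iterate_mod_apply m⟩

theorem exists_iterate_mem_of_image_inter_nonempty {α : Type*} {f : α → α} {x : α}
    {U V : Set α} {k : ℕ} (hUV : Disjoint U V) (hU : U ⊆ f ⁻¹' {x})
    (h : (f^[k] '' U ∩ V).Nonempty) : ∃ n, f^[n] x ∈ V := by
  obtain ⟨_, ⟨u, hu, rfl⟩, hv⟩ := h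
  cases k with
  | zero => exact (hUV.ne_of_mem hu hv rfl).elim
  | succ n =>
    have hfu : f u = x := hU hu
    exact ⟨n, by rwa [iterate_succ_apply, hfu] at hv⟩

section Isolated

variable {X : Type*} [TopologicalSpace X] {f : X → X} {x : X}

theorem exists_iterate_mem_of_nontrivial [T2Space X] (hTT : TopTransitive f) {U : Set X}
    (hUo : IsOpen U) (hU : U ⊆ f ⁻¹' {x}) (hUnt : U.Nontrivial) : ∃ n, f^[n] x ∈ U := by
  obtain ⟨a, ha, b, hb, hab⟩ := hUnt
  obtain ⟨A, B, hA, hB, haA, hbB, hAB⟩ := t2_separation hab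
  have hd : Disjoint (U ∩ A) (U ∩ B) := hAB.mono inter_subset_right inter_subset_right
  obtain ⟨k, hk | hk⟩ := hTT _ _ (hUo.inter hA) ⟨a, ha, haA⟩ (hUo.inter hB) ⟨b, hb, hbB⟩
  · obtain ⟨n, hn⟩ :=
      exists_iterate_mem_of_image_inter_nonempty hd (inter_subset_left.trans hU) hk
    exact ⟨n, hn.1⟩
  · obtain ⟨n, hn⟩ :=
      exists_iterate_mem_of_image_inter_nonempty hd.symm (inter_subset_left.trans hU) hk
    exact ⟨n, hn.1⟩

theorem isOpen_singleton_of_apply_eq [T2Space X] (hf : Continuous f) (hTT : TopTransitive f)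
    (hx : IsOpen ({x} : Set X)) {y : X} (hy : f y = x) : IsOpen ({y} : Set X) := by
  by_contra hy'
  have hW : IsOpen (f ⁻¹' {x}) := hx.preimage hf
  have hWinf : (f ⁻¹' {x}).Infinite := fun hfin =>
    hy' (isOpen_singleton_of_finite_mem_nhds y (hW.mem_nhds hy) hfin)
  obtain ⟨n, hn⟩ := exists_iterate_mem_of_nontrivial hTT hW subset_rfl hWinf.nontrivial
  have hper : IsPeriodicPt f (n + 1) x := (iterate_succ_apply' f n x).trans hn
  have hO := hper.finite_range_iterate n.succ_pos
  obtain ⟨m, hm⟩ := exists_iterate_mem_of_nontrivial hTT (hW.sdiff hO.isClosed) sdiff_subset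
    (hWinf.sdiff hO).nontrivial
  exact hm.2 ⟨m, rfl⟩

theorem isOpen_singleton_of_iterate_apply_eq [T2Space X] (hf : Continuous f)
    (hTT : TopTransitive f) (hx : IsOpen ({x} : Set X)) :
    ∀ (k : ℕ) {y : X}, f^[k] y = x → IsOpen ({y} : Set X)
  | 0, _, rfl => hx
  | k + 1, _, hy =>
    isOpen_singleton_of_apply_eq hf hTT (isOpen_singleton_of_iterate_apply_eq hf hTT hx k hy) rfl

theorem isOpen_setOf_isOpen_singleton : IsOpen {y : X | IsOpen ({y} : Set X)} :=
  isOpen_iff_forall_mem_open.2 fun y hy => ⟨{y}, singleton_subset_iff.2 hy, hy, rfl⟩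

end Isolated

/-- If `(X,f)` is topologically transitive and `x` is isolated, then every
point of the backward orbit of `x` is isolated; hence the set of isolated
points is open and −invariant. -/
theorem stmt_17 {X : Type*} [TopologicalSpace X] [T2Space X]
    (f : X → X) (hf : Continuous f)
    (hTT : ∀ U V : Set X, IsOpen U → U.Nonempty → IsOpen V → V.Nonempty →
      ∃ k : ℕ, (f^[k] '' U ∩ V).Nonempty ∨ (f^[k] '' V ∩ U).Nonempty) :
    (∀ x : X, IsOpen ({x} : Set X) →
      ∀ k : ℕ, ∀ y ∈ f^[k] ⁻¹' {x}, IsOpen ({y} : Set X)) ∧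
    IsOpen {y : X | IsOpen ({y} : Set X)} ∧
    f ⁻¹' {y : X | IsOpen ({y} : Set X)} ⊆ {y : X | IsOpen ({y} : Set X)} :=
  ⟨fun _ hx k _ hy => isOpen_singleton_of_iterate_apply_eq hf hTT hx k hy,
    isOpen_setOf_isOpen_singleton,
    fun _ hy => isOpen_singleton_of_apply_eq hf hTT hy rfl⟩
end

section
/- Let X be a perfect T₁ space. If (X,f) has a dense orbit sequence, then (X,f) satisfies TT₊: for all nonempty open U,V there is p ∈ ℕ with f^p(U) ∩ V ≠ ∅. -/
open Set Filter Topology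

/-!
Everything reduces to finding indices `k ≤ m` with `x k ∈ U` and `x m ∈ V`. In a T₁ space
without isolated points a dense set stays dense after removing finitely many points. For a
forward orbit this makes every tail `x '' Ici a` dense, so a tail starting in `U` meets `V`.
For a bi-infinite orbit take `x a ∈ U` and `x b ∈ V`; if `b < a`, put `n = a - b`. The open set
`V ∩ (f^[n])⁻¹' U` contains `x b`, hence a point `x j` with `j` outside the finite window
`(b - n, a)`: either `a ≤ j`, or `j + n ≤ b` and then `x (j + n) ∈ U`.
-/

section

variable {X : Type*} {f : X → X}

theorem iterate_apply_of_orbit {ι : Type*} [AddMonoidWithOne ι] {x : ι → X}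
    (hx : ∀ k, f (x k) = x (k + 1)) (k : ι) (n : ℕ) : f^[n] (x k) = x (k + n) := by
  induction n with
  | zero => simp
  | succ n ih => rw [Function.iterate_succ_apply', ih, hx, Nat.cast_succ, add_assoc]

theorem iterate_image_inter_nonempty_of_orbit {ι : Type*} [AddMonoidWithOne ι] {x : ι → X}
    (hx : ∀ k, f (x k) = x (k + 1)) {U V : Set X} {k m : ι} {n : ℕ} (hkm : k + n = m)
    (hk : x k ∈ U) (hm : x m ∈ V) : (f^[n] '' U ∩ V).Nonempty :=
  ⟨_, mem_image_of_mem _ hk, by rwa [iterate_apply_of_orbit hx, hkm]⟩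

variable [TopologicalSpace X] [T1Space X] [∀ x : X, NeBot (𝓝[≠] x)]

theorem DenseRange.dense_image_Ici {x : ℕ → X} (hd : DenseRange x) (a : ℕ) :
    Dense (x '' Ici a) :=
  (hd.sdiff_finite ((finite_Iio a).image x)).mono <| by
    rintro _ ⟨⟨k, rfl⟩, hkF⟩
    exact mem_image_of_mem x (mem_Ici.mpr (not_lt.mp fun hka ↦ hkF (mem_image_of_mem x hka)))

theorem exists_iterate_image_inter_nonempty_of_denseRange_nat {x : ℕ → X}
    (hx : ∀ k, f (x k) = x (k + 1)) (hd : DenseRange x) {U V : Set X} (hU : IsOpen U)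
    (hUne : U.Nonempty) (hV : IsOpen V) (hVne : V.Nonempty) :
    ∃ p : ℕ, (f^[p] '' U ∩ V).Nonempty := by
  obtain ⟨a, ha⟩ := hd.exists_mem_open hU hUne
  obtain ⟨_, ⟨m, ham, rfl⟩, hm⟩ := (hd.dense_image_Ici a).exists_mem_open hV hVne
  exact ⟨m - a, iterate_image_inter_nonempty_of_orbit hx (Nat.add_sub_cancel' ham) ha hm⟩

theorem exists_iterate_image_inter_nonempty_of_denseRange_int (hf : Continuous f) {x : ℤ → X}
    (hx : ∀ k, f (x k) = x (k + 1)) (hd : DenseRange x) {U V : Set X} (hU : IsOpen U)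
    (hUne : U.Nonempty) (hV : IsOpen V) (hVne : V.Nonempty) :
    ∃ p : ℕ, (f^[p] '' U ∩ V).Nonempty := by
  suffices ∃ k m, k ≤ m ∧ x k ∈ U ∧ x m ∈ V by
    obtain ⟨k, m, hkm, hk, hm⟩ := this
    exact ⟨(m - k).toNat, iterate_image_inter_nonempty_of_orbit hx (by omega) hk hm⟩
  obtain ⟨a, ha⟩ := hd.exists_mem_open hU hUne
  obtain ⟨b, hb⟩ := hd.exists_mem_open hV hVne
  rcases le_or_gt a b with hab | hba
  · exact ⟨a, b, hab, ha, hb⟩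
  set n := (a - b).toNat
  have hn : b + n = a := by omega
  have hW : IsOpen (V ∩ f^[n] ⁻¹' U) := hV.inter (hU.preimage (hf.iterate n))
  have hbW : x b ∈ V ∩ f^[n] ⁻¹' U := ⟨hb, by rwa [mem_preimage, iterate_apply_of_orbit hx, hn]⟩
  obtain ⟨_, ⟨⟨j, rfl⟩, hjF⟩, hjV, hjU⟩ :=
    (hd.sdiff_finite ((finite_Ioo (b - n) a).image x)).exists_mem_open hW ⟨_, hbW⟩
  rw [mem_preimage, iterate_apply_of_orbit hx] at hjU
  have hj : j ∉ Ioo (b - n) a := fun h ↦ hjF (mem_image_of_mem x h)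
  rcases le_or_gt a j with haj | hja
  · exact ⟨a, j, haj, ha, hjV⟩
  · exact ⟨j + n, b, by simp only [mem_Ioo, not_and_or] at hj; omega, hjU, hb⟩

end

/-- On a perfect T₁ space, a dense orbit sequence (bi-infinite, or forward
with no preimage of the initial point) implies TT₊. -/
theorem stmt_19 {X : Type*} [TopologicalSpace X] [T1Space X]
    (hperf : ∀ x : X, ¬ IsOpen ({x} : Set X))
    (f : X → X) (hf : Continuous f)
    (hDO : (∃ x : ℤ → X, (∀ k, f (x k) = x (k + 1)) ∧ Dense (Set.range x)) ∨
      (∃ x : ℕ → X, (∀ k, f (x k) = x (k + 1)) ∧ f ⁻¹' {x 0} = ∅ ∧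
        Dense (Set.range x))) :
    ∀ U V : Set X, IsOpen U → U.Nonempty → IsOpen V → V.Nonempty →
      ∃ p : ℕ, (f^[p] '' U ∩ V).Nonempty := by
  intro U V hU hUne hV hVne
  have : ∀ x : X, NeBot (𝓝[≠] x) := fun x ↦
    ⟨fun h ↦ hperf x ((isOpen_singleton_iff_punctured_nhds x).mpr h)⟩
  rcases hDO with ⟨x, hx, hd⟩ | ⟨x, hx, -, hd⟩
  · exact exists_iterate_image_inter_nonempty_of_denseRange_int hf hx hd hU hUne hV hVne
  · exact exists_iterate_image_inter_nonempty_of_denseRange_nat hx hd hU hUne hV hVne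
end
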